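/- arXiv:2508.11589 — 3 statements merged into one kernel-verified Lean document; each statement's English description precedes it below -/
import Mathlib

section
/- Let R be a commutative ring, M an R-module that is p-adically separated (i.e. the intersection of p^n·M over all n is zero), and d : R → M a derivation (an additive map satisfying the Leibniz rule d(xy) = x·d(y) + y·d(x)). Suppose u ∈ R admits a compatible system of p-power roots, i.e. there is a sequence (u_n)_{n≥0} in R with u_0 = u and u_n^p = u_{n-1} for all n ≥ 1. Then d(u) = 0. -/
/-!
Iterating the roots gives `u = u_n ^ (p ^ n)`, so the power rule for `d` yields
`d u = p ^ n • (u_n ^ (p ^ n - 1) • d u_n) ∈ p ^ n M` for every `n`;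
separatedness then forces `d u = 0`.
-/

section LeibnizRule

variable {R M : Type*} [CommRing R] [AddCommGroup M] [Module R M] {d : R → M}

theorem map_one_eq_zero_of_leibniz (hleib : ∀ x y : R, d (x * y) = x • d y + y • d x) :
    d 1 = 0 := by
  simpa using hleib 1 1

theorem map_pow_of_leibniz (hleib : ∀ x y : R, d (x * y) = x • d y + y • d x) (x : R)
    (n : ℕ) :
    d (x ^ n) = n • x ^ (n - 1) • d x := by
  induction n with
  | zero => rw [pow_zero, map_one_eq_zero_of_leibniz hleib, zero_smul]
  | succ n ih =>
    rcases Nat.eq_zero_or_pos n with rfl | hpos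
    · simp
    · have hx : x * x ^ (n - 1) = x ^ n := by rw [← pow_succ', Nat.sub_add_cancel hpos]
      rw [pow_succ', hleib, ih, smul_comm x n, smul_smul x, hx, Nat.add_sub_cancel, succ_nsmul]

end LeibnizRule

theorem pow_pow_eq_of_pow_eq_pred {R : Type*} [Monoid R] {p : ℕ} {u : ℕ → R}
    (hroot : ∀ n : ℕ, 1 ≤ n → u n ^ p = u (n - 1)) (n : ℕ) : u n ^ p ^ n = u 0 := by
  induction n with
  | zero => rw [pow_zero, pow_one]
  | succ n ih => rw [pow_succ, pow_mul', hroot (n + 1) (by omega), Nat.add_sub_cancel, ih]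

theorem stmt0_general (p : ℕ) (R : Type*) [CommRing R] (M : Type*) [AddCommGroup M] [Module R M]
    (hsep : ∀ m : M, (∀ n : ℕ, ∃ m' : M, m = ((p : R) ^ n) • m') → m = 0)
    (d : R → M)
    (hleib : ∀ x y : R, d (x * y) = x • d y + y • d x)
    (u : R) (u' : ℕ → R) (hu0 : u' 0 = u)
    (hroot : ∀ n : ℕ, 1 ≤ n → (u' n) ^ p = u' (n - 1)) :
    d u = 0 := by
  refine hsep (d u) fun n => ⟨u' n ^ (p ^ n - 1) • d (u' n), ?_⟩
  rw [← hu0, ← pow_pow_eq_of_pow_eq_pred hroot n, map_pow_of_leibniz hleib,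
    ← Nat.cast_smul_eq_nsmul R, Nat.cast_pow]

/-- Let `R` be a commutative ring, `M` an `R`-module that is `p`-adically
separated (the intersection of `p^n • M` over all `n` is zero), and `d : R → M` a derivation
(an additive map satisfying the Leibniz rule).  If `u ∈ R` admits a compatible system of
`p`-power roots `(u_n)` with `u_0 = u` and `u_n ^ p = u_{n-1}`, then `d u = 0`. -/
theorem stmt0 (p : ℕ) (R : Type*) [CommRing R] (M : Type*) [AddCommGroup M] [Module R M]
    (hsep : ∀ m : M, (∀ n : ℕ, ∃ m' : M, m = ((p : R) ^ n) • m') → m = 0)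
    (d : R → M)
    (hadd : ∀ x y : R, d (x + y) = d x + d y)
    (hleib : ∀ x y : R, d (x * y) = x • d y + y • d x)
    (u : R) (u' : ℕ → R) (hu0 : u' 0 = u)
    (hroot : ∀ n : ℕ, 1 ≤ n → (u' n) ^ p = u' (n - 1)) :
    d u = 0 :=
  stmt0_general p R M hsep d hleib u u' hu0 hroot
end

section
/- Let R be a commutative ring and let F be a functor from the category of finite free R-modules (with R-linear maps) to the category of sets such that F(0) is a singleton and, for all finite free modules M, N, the canonical map F(M × N) → F(M) × F(N) induced by the two projections is a bijection. Define on the set F(R): (i) a binary operation by composing the inverse of the bijection F(R²) ≅ F(R) × F(R) with F([1 1]) : F(R²) → F(R), where [1 1] : R² → R is (x,y) ↦ x + y; (ii) a zero element as the image of the unique element of F(0) under F(0 → R); and (iii) for each r ∈ R, a scalar action on F(R) given by F(multiplication-by-r : R → R). Then these operations make F(R) an R-module. -/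
open CategoryTheory

variable (R : Type) [CommRing R]

/-- The category of finite free `R`-modules, as a full subcategory of `ModuleCat R`. -/
abbrev FinFree :=
  CategoryTheory.ObjectProperty.FullSubcategory fun M : ModuleCat.{0} R => Module.Free R M ∧ Module.Finite R M

/-- The zero module as an object of the category of finite free `R`-modules. -/
def FinFree.zeroObj : FinFree R :=
  ⟨ModuleCat.of R PUnit, inferInstance, inferInstance⟩

/-- `R` itself as an object of the category of finite free `R`-modules. -/
def FinFree.line : FinFree R :=
  ⟨ModuleCat.of R R, inferInstanceAs (Module.Free R R), inferInstanceAs (Module.Finite R R)⟩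

variable {R} in
/-- The product of two finite free modules. -/
def FinFree.prod (M N : FinFree R) : FinFree R :=
  ⟨ModuleCat.of R (M.obj × N.obj),
    haveI := M.property.1; haveI := M.property.2; haveI := N.property.1; haveI := N.property.2
    inferInstanceAs (Module.Free R (M.obj × N.obj)),
    haveI := M.property.1; haveI := M.property.2; haveI := N.property.1; haveI := N.property.2
    inferInstanceAs (Module.Finite R (M.obj × N.obj))⟩

variable {R} in
/-- The first projection. -/
def FinFree.fstHom (M N : FinFree R) : FinFree.prod M N ⟶ M :=
  ObjectProperty.homMk (ModuleCat.ofHom (LinearMap.fst R M.obj N.obj))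

variable {R} in
/-- The second projection. -/
def FinFree.sndHom (M N : FinFree R) : FinFree.prod M N ⟶ N :=
  ObjectProperty.homMk (ModuleCat.ofHom (LinearMap.snd R M.obj N.obj))

/-- The addition map `[1 1] : R² → R`, `(x, y) ↦ x + y`. -/
def FinFree.sumHom : FinFree.prod (FinFree.line R) (FinFree.line R) ⟶ FinFree.line R :=
  ObjectProperty.homMk (ModuleCat.ofHom (LinearMap.fst R R R + LinearMap.snd R R R))

/-- The initial map `0 → R`. -/
def FinFree.fromZero : FinFree.zeroObj R ⟶ FinFree.line R :=
  ObjectProperty.homMk (ModuleCat.ofHom 0)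

variable {R} in
/-- Multiplication by `r`, as an endomorphism of `R`. -/
def FinFree.scalHom (r : R) : FinFree.line R ⟶ FinFree.line R :=
  ObjectProperty.homMk (ModuleCat.ofHom (r • (LinearMap.id : R →ₗ[R] R)))

/-!
For `u v : A ⟶ R` the morphism `u + v` factors as `(u, v) : A ⟶ R²` followed by `[1 1]`, so
`F(u + v) x = F u x + F v x` in `F(R)`; likewise every zero morphism into `R` factors through
the zero module, so `F 0 x` is the zero of `F(R)`. Each module axiom is therefore the image
under `F` of the corresponding identity between morphisms of the `R`-linear category of finite
free modules, evaluated at a point of `F(R)`, `F(R²)` or `F(R³)` whose projections are the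
given elements.
-/

namespace FinFree

variable {R}

@[ext]
lemma hom_ext {M N : FinFree R} {f g : M ⟶ N} (h : ∀ x, f.hom.hom x = g.hom.hom x) : f = g :=
  ObjectProperty.hom_ext _ (ModuleCat.hom_ext (LinearMap.ext h))

def lift {A M N : FinFree R} (u : A ⟶ M) (v : A ⟶ N) : A ⟶ prod M N :=
  ObjectProperty.homMk (ModuleCat.ofHom (u.hom.hom.prod v.hom.hom))

@[simp]
lemma lift_fstHom {A M N : FinFree R} (u : A ⟶ M) (v : A ⟶ N) : lift u v ≫ fstHom M N = u :=
  rfl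

@[simp]
lemma lift_sndHom {A M N : FinFree R} (u : A ⟶ M) (v : A ⟶ N) : lift u v ≫ sndHom M N = v :=
  rfl

lemma lift_comp_sumHom {A : FinFree R} (u v : A ⟶ line R) : lift u v ≫ sumHom R = u + v :=
  rfl

lemma fromZero_eq_zero : fromZero R = 0 := rfl

lemma scalHom_zero : scalHom (0 : R) = 0 := by ext x; exact zero_smul R x

lemma scalHom_one : scalHom (1 : R) = 𝟙 _ := by ext x; exact one_smul R x

lemma scalHom_add (r s : R) : scalHom (r + s) = scalHom r + scalHom s := by
  ext x; exact add_smul r s x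

lemma scalHom_mul (r s : R) : scalHom (r * s) = scalHom r ≫ scalHom s := by
  ext x; rw [mul_comm]; exact mul_smul s r x

section Functor

variable (F : FinFree R ⥤ Type)
  (hprod : ∀ M N : FinFree R,
    Function.Bijective fun x : F.obj (prod M N) => (F.map (fstHom M N) x, F.map (sndHom M N) x))

noncomputable def pair {M N : FinFree R} (a : F.obj M) (b : F.obj N) : F.obj (prod M N) :=
  (Equiv.ofBijective _ (hprod M N)).symm (a, b)

@[simp]
lemma map_fstHom_pair {M N : FinFree R} (a : F.obj M) (b : F.obj N) :
    F.map (fstHom M N) (pair F hprod a b) = a :=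
  congrArg Prod.fst ((Equiv.ofBijective _ (hprod M N)).apply_symm_apply (a, b))

@[simp]
lemma map_sndHom_pair {M N : FinFree R} (a : F.obj M) (b : F.obj N) :
    F.map (sndHom M N) (pair F hprod a b) = b :=
  congrArg Prod.snd ((Equiv.ofBijective _ (hprod M N)).apply_symm_apply (a, b))

lemma map_lift {A M N : FinFree R} (u : A ⟶ M) (v : A ⟶ N) (x : F.obj A) :
    F.map (lift u v) x = pair F hprod (F.map u x) (F.map v x) := by
  apply (hprod M N).1
  simp only [map_fstHom_pair, map_sndHom_pair, ← Functor.map_comp_apply, lift_fstHom,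
    lift_sndHom]

noncomputable def lineAdd (a b : F.obj (line R)) : F.obj (line R) :=
  F.map (sumHom R) (pair F hprod a b)

lemma map_add_apply {A : FinFree R} (u v : A ⟶ line R) (x : F.obj A) :
    F.map (u + v) x = lineAdd F hprod (F.map u x) (F.map v x) := by
  rw [lineAdd, ← map_lift, ← Functor.map_comp_apply, lift_comp_sumHom]

lemma lineAdd_eq_map_add (a b : F.obj (line R)) :
    lineAdd F hprod a b = F.map (fstHom _ _ + sndHom _ _) (pair F hprod a b) := by
  rw [map_add_apply, map_fstHom_pair, map_sndHom_pair]

lemma lineAdd_comm (a b : F.obj (line R)) : lineAdd F hprod a b = lineAdd F hprod b a := by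
  rw [lineAdd_eq_map_add, add_comm, map_add_apply, map_fstHom_pair, map_sndHom_pair]

lemma lineAdd_assoc (a b c : F.obj (line R)) :
    lineAdd F hprod (lineAdd F hprod a b) c = lineAdd F hprod a (lineAdd F hprod b c) := by
  set x := pair F hprod (pair F hprod a b) c
  have ha : F.map (fstHom _ _ ≫ fstHom _ _) x = a := by simp [x]
  have hb : F.map (fstHom _ _ ≫ sndHom _ _) x = b := by simp [x]
  have hc : F.map (sndHom _ _) x = c := by simp [x]
  rw [← ha, ← hb, ← hc, ← map_add_apply, ← map_add_apply, ← map_add_apply, ← map_add_apply,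
    add_assoc]

lemma lineAdd_map_self (v : line R ⟶ line R) (a : F.obj (line R)) :
    lineAdd F hprod a (F.map v a) = F.map (𝟙 _ + v) a := by
  rw [map_add_apply, Functor.map_id_apply]

variable (pt : F.obj (zeroObj R)) (hpt : ∀ x, x = pt)

include hpt in
lemma map_zero_apply {A : FinFree R} (x : F.obj A) :
    F.map (0 : A ⟶ line R) x = F.map (fromZero R) pt := by
  rw [← Limits.zero_comp (Y := zeroObj R) (f := fromZero R), Functor.map_comp_apply,
    hpt (F.map 0 x)]

include hpt in
lemma lineAdd_zero (a : F.obj (line R)) :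
    lineAdd F hprod a (F.map (fromZero R) pt) = a := by
  rw [← map_zero_apply F pt hpt a, lineAdd_map_self, add_zero, Functor.map_id_apply]

include hpt in
lemma lineAdd_map_neg_id (a : F.obj (line R)) :
    lineAdd F hprod a (F.map (-𝟙 _) a) = F.map (fromZero R) pt := by
  rw [lineAdd_map_self, add_neg_cancel, map_zero_apply F pt hpt]

lemma map_scalHom_lineAdd (r : R) (a b : F.obj (line R)) :
    F.map (scalHom r) (lineAdd F hprod a b)
      = lineAdd F hprod (F.map (scalHom r) a) (F.map (scalHom r) b) := by
  rw [lineAdd_eq_map_add, ← Functor.map_comp_apply, Preadditive.add_comp, map_add_apply,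
    Functor.map_comp_apply, Functor.map_comp_apply, map_fstHom_pair, map_sndHom_pair]

include hpt in
lemma map_scalHom_zero (r : R) :
    F.map (scalHom r) (F.map (fromZero R) pt) = F.map (fromZero R) pt := by
  rw [← Functor.map_comp_apply, fromZero_eq_zero, Limits.zero_comp, map_zero_apply F pt hpt]

end Functor

end FinFree

/-- Let `F` be a set-valued functor on finite free `R`-modules such that
`F(0)` is a singleton and `F(M × N) → F(M) × F(N)` is always bijective.  Define on `F(R)`
an addition (via the inverse of `F(R²) ≅ F(R) × F(R)` followed by `F([1 1])`), a zero
(the image of the unique point of `F(0)`), and a scalar action (`r` acts by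
`F(mult-by-r)`).  Then these operations make `F(R)` an `R`-module. -/
theorem stmt4 (F : FinFree R ⥤ Type)
    (pt : F.obj (FinFree.zeroObj R)) (hpt : ∀ x, x = pt)
    (hprod : ∀ M N : FinFree R,
      Function.Bijective fun x : F.obj (FinFree.prod M N) =>
        (F.map (FinFree.fstHom M N) x, F.map (FinFree.sndHom M N) x)) :
    let add : F.obj (FinFree.line R) → F.obj (FinFree.line R) → F.obj (FinFree.line R) :=
      fun a b => F.map (FinFree.sumHom R)
        ((Equiv.ofBijective _ (hprod (FinFree.line R) (FinFree.line R))).symm (a, b));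
    let zero : F.obj (FinFree.line R) := F.map (FinFree.fromZero R) pt;
    let smul : R → F.obj (FinFree.line R) → F.obj (FinFree.line R) :=
      fun r a => F.map (FinFree.scalHom r) a;
    (∀ a b, add a b = add b a) ∧
    (∀ a b c, add (add a b) c = add a (add b c)) ∧
    (∀ a, add a zero = a) ∧
    (∀ a, ∃ b, add a b = zero) ∧
    (∀ a, smul 1 a = a) ∧
    (∀ r a b, smul r (add a b) = add (smul r a) (smul r b)) ∧
    (∀ r s a, smul (r + s) a = add (smul r a) (smul s a)) ∧
    (∀ r s a, smul (r * s) a = smul s (smul r a)) ∧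
    (∀ a, smul 0 a = zero) ∧
    (∀ r, smul r zero = zero) := by
  dsimp only
  open FinFree in
  exact ⟨lineAdd_comm F hprod, lineAdd_assoc F hprod, lineAdd_zero F hprod pt hpt,
    fun a => ⟨_, lineAdd_map_neg_id F hprod pt hpt a⟩,
    fun a => by rw [scalHom_one, Functor.map_id_apply],
    map_scalHom_lineAdd F hprod,
    fun r s a => by rw [scalHom_add]; exact map_add_apply F hprod _ _ a,
    fun r s a => by rw [scalHom_mul, Functor.map_comp_apply],
    fun a => by rw [scalHom_zero, map_zero_apply F pt hpt],
    map_scalHom_zero F pt hpt⟩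
end

section
/- Let R be a commutative ring, t ∈ R, and let R̂ = lim_n R/t^n R denote the t-adic completion. Assume t is a non-zero-divisor in both R and R̂. Then the sequence 0 → R → R[1/t] × R̂ → R̂[1/t] → 0 is exact, where the first map is a ↦ (a, a) and the second is (b, c) ↦ b − c (using the canonical maps R[1/t] → R̂[1/t] and R̂ → R̂[1/t]). -/
/-!
For every `n` the map `R ⧸ tⁿ → R̂ ⧸ tⁿ` is bijective, because the kernel of the evaluation
`R̂ → R ⧸ tⁿ` is `tⁿ R̂`. Clearing denominators, each of (ii) and (iii) reduces to one half of
this bijectivity, so they hold for any ring map `f : R → S` with `R ⧸ tⁿ ≃ S ⧸ tⁿ` and `f t`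
a non-zero-divisor; (i) is the injectivity of `R → R[1/t]`.
-/

open nonZeroDivisors

theorem Submodule.mem_span_singleton_pow_smul_top_iff {R M : Type*} [CommRing R] [AddCommGroup M]
    [Module R M] (t : R) (n : ℕ) (x : M) :
    x ∈ (Ideal.span {t}) ^ n • (⊤ : Submodule R M) ↔ ∃ y : M, t ^ n • y = x := by
  rw [Ideal.span_singleton_pow, Submodule.ideal_span_singleton_smul,
    Submodule.mem_smul_pointwise_iff_exists]
  simp

namespace AdicCompletion

variable {R : Type*} [CommRing R] (t : R)

theorem eval_eq_zero_iff_exists_pow_smul {M : Type*} [AddCommGroup M] [Module R M] (n : ℕ)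
    (x : AdicCompletion (Ideal.span {t}) M) :
    eval _ M n x = 0 ↔ ∃ y, t ^ n • y = x := by
  rw [← LinearMap.mem_ker, ← pow_smul_top_eq_ker_eval (Submodule.fg_span_singleton t),
    Submodule.mem_span_singleton_pow_smul_top_iff]

theorem exists_eq_algebraMap_add_pow_mul (n : ℕ) (c : AdicCompletion (Ideal.span {t}) R) :
    ∃ a c', c = algebraMap R _ a + algebraMap R _ t ^ n * c' := by
  obtain ⟨a, ha⟩ := Submodule.Quotient.mk_surjective _ (eval _ R n c)
  obtain ⟨c', hc'⟩ := (eval_eq_zero_iff_exists_pow_smul t n (c - algebraMap R _ a)).mp <| by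
    rw [map_sub, ← ha, sub_eq_zero]; rfl
  refine ⟨a, c', ?_⟩
  rw [← map_pow, ← Algebra.smul_def, hc', add_sub_cancel]

theorem pow_dvd_of_algebraMap_eq_pow_mul (n : ℕ) (a : R) (c : AdicCompletion (Ideal.span {t}) R)
    (h : algebraMap R (AdicCompletion (Ideal.span {t}) R) a = algebraMap R _ t ^ n * c) :
    t ^ n ∣ a := by
  have heval : eval (Ideal.span {t}) R n (algebraMap R _ a) = 0 := by
    rw [eval_eq_zero_iff_exists_pow_smul]
    exact ⟨c, by rw [h, Algebra.smul_def, map_pow]⟩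
  obtain ⟨y, hy⟩ := (Submodule.mem_span_singleton_pow_smul_top_iff t n a).mp
    ((Submodule.Quotient.mk_eq_zero _).mp heval)
  exact ⟨y, hy.symm⟩

end AdicCompletion

namespace Localization

variable {R S : Type*} [CommRing R] [CommRing S] (f : R →+* S) {t : R}

theorem awayMap_algebraMap (a : R) :
    awayMap f t (algebraMap R (Away t) a) = algebraMap S (Away (f t)) (f a) :=
  IsLocalization.map_eq _ a

theorem awayMap_eq_algebraMap_iff (hft : f t ∈ S⁰)
    (hdvd : ∀ (n : ℕ) (a : R) (c : S), f a = f t ^ n * c → t ^ n ∣ a)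
    (b : Away t) (c : S) :
    awayMap f t b = algebraMap S (Away (f t)) c ↔
      ∃ a : R, algebraMap R (Away t) a = b ∧ f a = c := by
  refine ⟨fun hbc ↦ ?_, ?_⟩
  · obtain ⟨n, a, hb⟩ := IsLocalization.Away.surj t b
    have hfa : f a = f t ^ n * c := by
      apply IsLocalization.injective (Away (f t)) (Submonoid.powers_le.mpr hft)
      rw [← awayMap_algebraMap, ← hb, map_mul, hbc, map_pow, awayMap_algebraMap, map_mul, map_pow,
        mul_comm]
    obtain ⟨a', rfl⟩ := hdvd n a c hfa
    refine ⟨a', ?_, ?_⟩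
    · refine (((IsLocalization.Away.algebraMap_isUnit t).pow n).mul_left_cancel ?_).symm
      rw [mul_comm, hb, map_mul, map_pow]
    · rw [map_mul, map_pow] at hfa
      exact (mul_cancel_left_mem_nonZeroDivisors (pow_mem hft n)).mp hfa
  · rintro ⟨a, rfl, rfl⟩
    exact awayMap_algebraMap f a

theorem exists_eq_awayMap_sub_algebraMap
    (hsurj : ∀ (n : ℕ) (c : S), ∃ (a : R) (c' : S), c = f a + f t ^ n * c')
    (d : Away (f t)) :
    ∃ (b : Away t) (c : S), d = awayMap f t b - algebraMap S (Away (f t)) c := by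
  obtain ⟨n, c, hd⟩ := IsLocalization.Away.surj (f t) d
  obtain ⟨a, c', rfl⟩ := hsurj n c
  obtain ⟨b, hb⟩ : ∃ b : Away t, b * algebraMap R _ t ^ n = algebraMap R _ a :=
    ⟨IsLocalization.mk' _ a (⟨t ^ n, n, rfl⟩ : Submonoid.powers t),
      by rw [← map_pow]; exact IsLocalization.mk'_spec _ _ _⟩
  have hb' : awayMap f t b * algebraMap S _ (f t) ^ n = algebraMap S _ (f a) := by
    simpa [awayMap_algebraMap] using congrArg (awayMap f t) hb
  refine ⟨b, -c', ((IsLocalization.Away.algebraMap_isUnit (f t)).pow n).mul_right_cancel ?_⟩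
  rw [hd, map_add, map_mul, map_pow, map_neg]
  linear_combination -hb'

end Localization

/-- Beauville–Laszlo exact sequence.  Let `R` be a commutative ring,
`t ∈ R`, and `R̂ = lim R/tⁿ` the `t`-adic completion.  Assume `t` is a non-zero-divisor in
both `R` and `R̂`.  Then the sequence `0 → R → R[1/t] × R̂ → R̂[1/t] → 0` is exact, where
the first map is `a ↦ (a, a)` and the second is `(b, c) ↦ b − c`. -/
theorem stmt16 (R : Type) [CommRing R] (t : R)
    (ht : t ∈ nonZeroDivisors R)
    (ht' : algebraMap R (AdicCompletion (Ideal.span {t}) R) t ∈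
      nonZeroDivisors (AdicCompletion (Ideal.span {t}) R)) :
    -- (i) injectivity of `a ↦ (a, a)`
    Function.Injective (fun a : R =>
      ((algebraMap R (Localization.Away t) a,
        algebraMap R (AdicCompletion (Ideal.span {t}) R) a) :
        Localization.Away t × AdicCompletion (Ideal.span {t}) R)) ∧
    -- (ii) exactness in the middle: `(b, c)` maps to `0` iff it comes from `R`
    (∀ (b : Localization.Away t) (c : AdicCompletion (Ideal.span {t}) R),
      Localization.awayMap (algebraMap R (AdicCompletion (Ideal.span {t}) R)) t b =
          algebraMap (AdicCompletion (Ideal.span {t}) R)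
            (Localization.Away
              (algebraMap R (AdicCompletion (Ideal.span {t}) R) t)) c ↔
        ∃ a : R, algebraMap R (Localization.Away t) a = b ∧
          algebraMap R (AdicCompletion (Ideal.span {t}) R) a = c) ∧
    -- (iii) surjectivity of `(b, c) ↦ b − c`
    (∀ d : Localization.Away (algebraMap R (AdicCompletion (Ideal.span {t}) R) t),
      ∃ (b : Localization.Away t) (c : AdicCompletion (Ideal.span {t}) R),
        d = Localization.awayMap (algebraMap R (AdicCompletion (Ideal.span {t}) R)) t b -
          algebraMap (AdicCompletion (Ideal.span {t}) R)
            (Localization.Away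
              (algebraMap R (AdicCompletion (Ideal.span {t}) R) t)) c) := by
  exact ⟨fun _ _ h ↦ IsLocalization.injective (Localization.Away t) (Submonoid.powers_le.mpr ht)
      (congrArg Prod.fst h),
    Localization.awayMap_eq_algebraMap_iff _ ht'
      (AdicCompletion.pow_dvd_of_algebraMap_eq_pow_mul t),
    Localization.exists_eq_awayMap_sub_algebraMap _
      (AdicCompletion.exists_eq_algebraMap_add_pow_mul t)⟩
end
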